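/- arXiv:2104.03571 — 11 statements merged into one kernel-verified Lean document; each statement's English description precedes it below -/
import Mathlib

section
/- Lexicographic revision and refinement commute: for every total preorder C (a finite partition of the set of propositional models into an ordered sequence of classes) and formulas R and L, the preorder obtained by first lexicographically revising C by L and then refining by R equals the preorder obtained by first refining C by R and then lexicographically revising by L. -/
open Set
open scoped Classical

variable {M : Type*}

namespace BeliefRevision

/-- `minSet C P`: the minimal models of `P` according to the total preorder `C`,
i.e. `C(i) ∩ Mod(P)` for the least `i` making this nonempty. -/
noncomputable def minSet : List (Set M) → Set M → Set M
  | [], _ => ∅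
  | X :: rest, P => if (X ∩ P).Nonempty then X ∩ P else minSet rest P

/-- Equivalence of total preorders: same minimal models for every formula. -/
def equivC (C C' : List (Set M)) : Prop :=
  ∀ P : Set M, minSet C P = minSet C' P

/-- A total preorder: an ordered partition (empty classes allowed) of all models. -/
def IsPartition (C : List (Set M)) : Prop :=
  C.Pairwise Disjoint ∧ C.foldr (· ∪ ·) ∅ = Set.univ

/-- Lexicographic revision. -/
def lex (C : List (Set M)) (L : Set M) : List (Set M) :=
  C.map (· ∩ L) ++ C.map (· \ L)

/-- Refinement. -/
def refi (C : List (Set M)) (R : Set M) : List (Set M) :=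
  C.flatMap fun X => [X ∩ R, X \ R]

/-- Natural revision: `[C(i)∩P, C(0),...,C(i-1), C(i)\P, C(i+1),...,C(m)]`. -/
noncomputable def natr : List (Set M) → Set M → List (Set M)
  | [], _ => []
  | X :: rest, P =>
    if (X ∩ P).Nonempty then (X ∩ P) :: (X \ P) :: rest
    else
      match natr rest P with
      | a :: r => a :: X :: r
      | [] => [X]

/-- Severe antiwithdrawal: merge classes `0..i` where `i` is least with `C(i)∩P ≠ ∅`. -/
noncomputable def sevw : List (Set M) → Set M → List (Set M)
  | [], _ => []
  | X :: rest, P =>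
    if (X ∩ P).Nonempty then X :: rest
    else
      match sevw rest P with
      | a :: r => (X ∪ a) :: r
      | [] => [X]

/-- Restrained revision. -/
noncomputable def res : List (Set M) → Set M → List (Set M)
  | [], _ => []
  | X :: rest, P =>
    if (X ∩ P).Nonempty then
      (X ∩ P) :: (X \ P) :: rest.flatMap (fun Y => [Y ∩ P, Y \ P])
    else
      match res rest P with
      | a :: r => a :: (X ∩ P) :: (X \ P) :: r
      | [] => [X ∩ P, X \ P]

/-- Very radical revision. -/
def rad (C : List (Set M)) (P : Set M) : List (Set M) :=
  C.map (· ∩ P) ++ [C.foldr (· ∪ ·) ∅ \ P]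

/-- Severe revision: `[C(i)∩P, (C(0)∪...∪C(i))\P, C(i+1),...,C(m)]`. -/
noncomputable def sevr : List (Set M) → Set M → List (Set M)
  | [], _ => []
  | X :: rest, P =>
    if (X ∩ P).Nonempty then (X ∩ P) :: (X \ P) :: rest
    else
      match sevr rest P with
      | a :: b :: r => a :: (X ∪ b) :: r
      | l => X :: l

/-- Moderate severe revision. -/
noncomputable def msev (C : List (Set M)) (P : Set M) : List (Set M) :=
  C.map (· ∩ P) ++ (sevw C P).map (· \ P)

/-- Merge `A` with the first nonempty class of the list (helper for `psev`). -/
noncomputable def mergeJ (A : Set M) : List (Set M) → List (Set M)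
  | [] => [A]
  | Y :: r => if Y.Nonempty then (A ∪ Y) :: r else mergeJ A r

/-- Plain severe revision:
`[C(i)∩P, C(0)∪...∪(C(i)\P)∪C(j), C(j+1),...,C(m)]` with `i` least with
`C(i)∩P ≠ ∅` and `j` the least index `> i` with `C(j) ≠ ∅`. -/
noncomputable def psev : List (Set M) → Set M → List (Set M)
  | [], _ => []
  | X :: rest, P =>
    if (X ∩ P).Nonempty then (X ∩ P) :: mergeJ (X \ P) rest
    else
      match psev rest P with
      | a :: b :: r => a :: (X ∪ b) :: r
      | l => X :: l

/-- Full meet revision. -/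
noncomputable def full (C : List (Set M)) (P : Set M) : List (Set M) :=
  [minSet C P, Set.univ \ minSet C P]

/-- `maxset F [F₁,...,Fₖ]`: conjoin each `Fᵢ` in order whenever consistent. -/
noncomputable def maxset : Set M → List (Set M) → Set M
  | F, [] => F
  | F, L :: rest => maxset (if (F ∩ L).Nonempty then F ∩ L else F) rest

/-- The underformula `under(S; Lₙ,...,L₁)`. -/
noncomputable def under : Set M → List (Set M) → Set M
  | _, [] => Set.univ
  | S, L :: rest =>
    if (S ∩ L).Nonempty then L ∩ under (S ∩ L) rest else L ∪ under S rest

/-- `upTo C S = C(0) ∪ ... ∪ C(i)` where `i` is least with `C(i)∩S ≠ ∅`. -/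
noncomputable def upTo : List (Set M) → Set M → Set M
  | [], _ => ∅
  | X :: rest, S => if (X ∩ S).Nonempty then X else X ∪ upTo rest S

noncomputable def longestAux : Set M → List (Set M) → Set M
  | A, [] => A
  | A, L :: rest => if (A ∩ L).Nonempty then longestAux (A ∩ L) rest else A

/-- Longest consistent conjunction of a sequence of formulas. -/
noncomputable def longest : List (Set M) → Set M
  | [] => Set.univ
  | L :: rest => longestAux L rest

/-- `rev` is a bottom-refining revision on `(C,P)`: it is a revision
(`min(C rev(P),⊤) = min(C,P)`) and, whenever `C(0)∩Mod(P) ≠ ∅`, class zero of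
the result is `C(0)∩Mod(P)` and class one is `C(0)\Mod(P)`. -/
noncomputable def BottomRefining (rev : List (Set M) → Set M → List (Set M))
    (C : List (Set M)) (P : Set M) : Prop :=
  minSet (rev C P) Set.univ = minSet C P ∧
  ((C.getD 0 ∅ ∩ P).Nonempty →
    (rev C P).getD 0 ∅ = C.getD 0 ∅ ∩ P ∧
    (rev C P).getD 1 ∅ = C.getD 0 ∅ \ P)

/-- Lexicographic revision and refinement commute. -/
theorem lex_refi_comm (C : List (Set M)) (hC : IsPartition C) (L R : Set M) :
    refi (lex C L) R = lex (refi C R) L := by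
  simp only [lex, refi, List.flatMap_append, List.flatMap_map, List.map_flatMap]
  congr 1 <;> { apply List.flatMap_congr; intro X _; simp; constructor <;> ext x <;> simp <;> tauto }

end BeliefRevision
end

section
/- A refinement at the end of a sequence of lexicographic revisions applied to the empty preorder can be moved to the front as a lexicographic revision: for all formulas L_1,...,L_n and R, the preorder ∅ lex(L_1) ... lex(L_n) ref(R) is equivalent to ∅ lex(R) lex(L_1) ... lex(L_n), where ∅ is the single-class preorder containing all models and two preorders are equivalent when they have the same minimal sets min(·,P) for every formula P. -/
open Set
open scoped Classical

variable {M : Type*}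

namespace BeliefRevision

lemma minSet_append (A B : List (Set M)) (P : Set M) :
    minSet (A ++ B) P = if (minSet A P).Nonempty then minSet A P else minSet B P := by
  induction A with
  | nil => simp [minSet]
  | cons X rest ih =>
    by_cases h : (X ∩ P).Nonempty <;> simp [minSet, h, ih]

lemma minSet_map_inter (C : List (Set M)) (L P : Set M) :
    minSet (C.map (· ∩ L)) P = minSet C (L ∩ P) := by
  induction C with
  | nil => simp [minSet]
  | cons X rest ih =>
    have hx : X ∩ L ∩ P = X ∩ (L ∩ P) := by rw [Set.inter_assoc]
    simp [minSet, hx, ih]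

lemma minSet_map_diff (C : List (Set M)) (L P : Set M) :
    minSet (C.map (· \ L)) P = minSet C (P \ L) := by
  induction C with
  | nil => simp [minSet]
  | cons X rest ih =>
    have hx : X \ L ∩ P = X ∩ (P \ L) := by ext x; simp [Set.mem_diff]; tauto
    simp [minSet, hx, ih]

lemma minSet_lex (C : List (Set M)) (L P : Set M) :
    minSet (lex C L) P =
      if (minSet C (L ∩ P)).Nonempty then minSet C (L ∩ P) else minSet C (P \ L) := by
  rw [lex, minSet_append, minSet_map_inter, minSet_map_diff]

lemma minSet_refi (C : List (Set M)) (R P : Set M) :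
    minSet (refi C R) P =
      if (minSet C P ∩ R).Nonempty then minSet C P ∩ R else minSet C P \ R := by
  induction C with
  | nil => simp [refi, minSet]
  | cons X rest ih =>
    have hflat : refi (X :: rest) R = (X ∩ R) :: (X \ R) :: refi rest R := by
      simp [refi]
    rw [hflat]
    by_cases h1 : (X ∩ R ∩ P).Nonempty
    · have hXP : (X ∩ P).Nonempty := by
        obtain ⟨x, hx⟩ := h1; exact ⟨x, hx.1.1, hx.2⟩
      have he : X ∩ P ∩ R = X ∩ R ∩ P := by
        rw [Set.inter_assoc, Set.inter_comm P R, Set.inter_assoc]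
      simp [minSet, h1, hXP, he]
    · by_cases h2 : (X \ R ∩ P).Nonempty
      · have hXP : (X ∩ P).Nonempty := by
          obtain ⟨x, hx⟩ := h2; exact ⟨x, hx.1.1, hx.2⟩
        have hne : ¬(X ∩ P ∩ R).Nonempty := by
          intro ⟨x, hx⟩; exact h1 ⟨x, ⟨hx.1.1, hx.2⟩, hx.1.2⟩
        have he : (X ∩ P) \ R = (X \ R) ∩ P := by
          ext x; simp [Set.mem_diff]; tauto
        simp [minSet, h1, h2, hXP, hne, he]
      · have hXP : ¬(X ∩ P).Nonempty := by
          intro ⟨x, hx⟩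
          by_cases hr : x ∈ R
          · exact h1 ⟨x, ⟨hx.1, hr⟩, hx.2⟩
          · exact h2 ⟨x, ⟨hx.1, hr⟩, hx.2⟩
        simp [minSet, h1, h2, hXP, ih]

lemma refi_lex_swap (C : List (Set M)) (L R : Set M) :
    equivC (refi (lex C L) R) (lex (refi C R) L) := by
  intro P
  rw [minSet_refi, minSet_lex, minSet_lex, minSet_refi, minSet_refi]
  set a := minSet C (L ∩ P) with ha'
  set b := minSet C (P \ L) with hb'
  by_cases ha : a.Nonempty
  · simp only [ha, if_true]
    by_cases hr : (a ∩ R).Nonempty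
    · simp [hr]
    · have hd : a \ R = a := by
        rw [Set.not_nonempty_iff_eq_empty] at hr
        ext x; simp [Set.mem_diff]
        intro hx hR
        exact absurd (Set.eq_empty_iff_forall_notMem.mp hr x ⟨hx, hR⟩) (fun h => h)
      simp [hr, hd, ha]
  · have hae : a = ∅ := Set.not_nonempty_iff_eq_empty.mp ha
    simp [ha, hae]

lemma foldl_lex_congr (Ls : List (Set M)) {C C' : List (Set M)}
    (h : equivC C C') : equivC (Ls.foldl lex C) (Ls.foldl lex C') := by
  induction Ls generalizing C C' with
  | nil => exact h
  | cons L Ls ih =>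
    apply ih
    intro P
    rw [minSet_lex, minSet_lex, h, h]

lemma refi_foldl_lex (Ls : List (Set M)) (R : Set M) :
    ∀ C : List (Set M),
      equivC (refi (Ls.foldl lex C) R) (Ls.foldl lex (refi C R)) := by
  induction Ls with
  | nil => intro C P; rfl
  | cons L Ls ih =>
    intro C P
    rw [List.foldl_cons, List.foldl_cons]
    calc minSet (refi (Ls.foldl lex (lex C L)) R) P
        = minSet (Ls.foldl lex (refi (lex C L) R)) P := ih (lex C L) P
      _ = minSet (Ls.foldl lex (lex (refi C R) L)) P :=
          foldl_lex_congr Ls (refi_lex_swap C L R) P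

/-- A refinement at the end of a sequence of lexicographic revisions from the
empty preorder can be moved to the front as a lexicographic revision. -/
theorem refi_to_front_lex (Ls : List (Set M)) (R : Set M) :
    equivC (refi (Ls.foldl lex [Set.univ]) R) (Ls.foldl lex (lex [Set.univ] R)) := by
  have h : refi [Set.univ] R = lex [Set.univ] R := by simp [refi, lex]
  have := refi_foldl_lex Ls R [Set.univ]
  rwa [h] at this

end BeliefRevision
end

section
/- Restrained revision decomposes into a refinement followed by a natural revision: for every total preorder C and formula P, C res(P) is equivalent to C ref(P) nat(P). -/
open Set
open scoped Classical

variable {M : Type*}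

namespace BeliefRevision

lemma minSet_insert_empty (Q : Set M) :
    ∀ (L1 L2 : List (Set M)), minSet (L1 ++ ∅ :: L2) Q = minSet (L1 ++ L2) Q
  | [], L2 => by simp [minSet]
  | X :: L1, L2 => by
    rw [List.cons_append, List.cons_append]
    show (if (X ∩ Q).Nonempty then X ∩ Q else minSet (L1 ++ ∅ :: L2) Q) = _
    rw [minSet_insert_empty Q L1 L2]
    rfl

lemma mem_foldr_union {x : M} :
    ∀ (C : List (Set M)), x ∈ C.foldr (· ∪ ·) ∅ → ∃ X ∈ C, x ∈ X
  | [], h => by simp at h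
  | X :: rest, h => by
    rcases h with h | h
    · exact ⟨X, by simp, h⟩
    · obtain ⟨Y, hY, hx⟩ := mem_foldr_union rest h
      exact ⟨Y, by simp [hY], hx⟩

lemma key (P : Set M) :
    ∀ (C : List (Set M)), (∃ X ∈ C, (X ∩ P).Nonempty) →
    ∃ (a : Set M) (L1 L2 : List (Set M)),
      res C P = a :: (L1 ++ L2) ∧ natr (refi C P) P = a :: (L1 ++ ∅ :: L2)
  | [], h => by simp at h
  | X :: rest, h => by
    by_cases hX : (X ∩ P).Nonempty
    · refine ⟨X ∩ P, [], (X \ P) :: rest.flatMap (fun Y => [Y ∩ P, Y \ P]),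
        ?_, ?_⟩
      · simp [res, hX]
      · have h1 : ((X ∩ P) ∩ P).Nonempty := by
          rwa [Set.inter_assoc, Set.inter_self]
        have h2 : (X ∩ P) \ P = ∅ := by
          ext y; simp (config := { contextual := true }) [Set.mem_diff]
        simp [refi, natr, h1, h2, List.flatMap]
    · have hrest : ∃ Y ∈ rest, (Y ∩ P).Nonempty := by
        rcases h with ⟨Y, hY, hYP⟩
        rcases List.mem_cons.mp hY with rfl | hY'
        · exact absurd hYP hX
        · exact ⟨Y, hY', hYP⟩
      obtain ⟨a, L1, L2, hres, hnat⟩ := key P rest hrest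
      have hXP : X ∩ P = ∅ := Set.not_nonempty_iff_eq_empty.mp hX
      have hXdP : (X \ P) ∩ P = ∅ := by
        ext y; simp (config := { contextual := true }) [Set.mem_diff]
      refine ⟨a, (X ∩ P) :: (X \ P) :: L1, L2, ?_, ?_⟩
      · simp [res, hX, hres]
      · have hE : ((∅ : Set M) ∩ P).Nonempty = False := by simp
        simp only [refi, List.flatMap_cons, List.cons_append, List.nil_append]
        show natr ((X ∩ P) :: (X \ P) :: refi rest P) P = _
        rw [hXP]
        simp only [natr, hE, Set.empty_inter, Set.not_nonempty_empty,
          if_false, hXdP, hnat]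

/-- Restrained revision decomposes into a refinement followed by a natural
revision. -/
theorem res_eq_refi_natr (C : List (Set M)) (hC : IsPartition C) (P : Set M)
    (hP : P.Nonempty) :
    equivC (res C P) (natr (refi C P) P) := by
  obtain ⟨p, hp⟩ := hP
  have hx : p ∈ C.foldr (· ∪ ·) ∅ := by rw [hC.2]; trivial
  obtain ⟨X, hXC, hpX⟩ := mem_foldr_union C hx
  obtain ⟨a, L1, L2, hres, hnat⟩ := key P C ⟨X, hXC, ⟨p, hpX, hp⟩⟩
  intro Q
  rw [hres, hnat]
  simp only [minSet]
  rw [minSet_insert_empty]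

end BeliefRevision
end

section
/- Severe revision decomposes into severe antiwithdrawal followed by natural revision: for every total preorder C and formula P, C sevr(P) is equivalent to C sev(P) nat(P). -/
open Set
open scoped Classical

variable {M : Type*}

namespace BeliefRevision

/-! Below the first class `C(i)` meeting `P`, severe antiwithdrawal merges `C(0), …, C(i)` into one
class, and natural revision then splits off its `P`-part, which is `C(i) ∩ P`; this is exactly what
severe revision does, so the two sides are equal as lists as soon as such an `i` exists. -/

lemma mem_foldr_union_iff {C : List (Set M)} {x : M} :
    x ∈ C.foldr (· ∪ ·) ∅ ↔ ∃ X ∈ C, x ∈ X := by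
  induction C with
  | nil => simp
  | cons X rest ih => simp [ih]

lemma IsPartition.exists_inter_nonempty {C : List (Set M)} (hC : IsPartition C) {P : Set M}
    (hP : P.Nonempty) : ∃ X ∈ C, (X ∩ P).Nonempty := by
  obtain ⟨x, hx⟩ := hP
  obtain ⟨X, hXC, hxX⟩ := mem_foldr_union_iff.1 (hC.2 ▸ mem_univ x)
  exact ⟨X, hXC, x, hxX, hx⟩

lemma exists_sevw_eq_cons {C : List (Set M)} {P : Set M} (h : ∃ X ∈ C, (X ∩ P).Nonempty) :
    ∃ a r, sevw C P = a :: r ∧ (a ∩ P).Nonempty := by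
  induction C with
  | nil => simp at h
  | cons X rest ih =>
    by_cases hX : (X ∩ P).Nonempty
    · exact ⟨X, rest, by simp [sevw, hX], hX⟩
    · obtain ⟨a, r, ha, haP⟩ := ih (((List.exists_mem_cons_iff _ X rest).1 h).resolve_left hX)
      refine ⟨X ∪ a, r, by simp [sevw, hX, ha], haP.mono ?_⟩
      exact inter_subset_inter_left P subset_union_right

lemma sevr_eq_natr_sevw {C : List (Set M)} {P : Set M} (h : ∃ X ∈ C, (X ∩ P).Nonempty) :
    sevr C P = natr (sevw C P) P := by
  induction C with
  | nil => simp at h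
  | cons X rest ih =>
    by_cases hX : (X ∩ P).Nonempty
    · simp [sevr, sevw, natr, hX]
    · have hrest := ((List.exists_mem_cons_iff _ X rest).1 h).resolve_left hX
      obtain ⟨a, r, ha, haP⟩ := exists_sevw_eq_cons hrest
      have hXP : X ∩ P = ∅ := not_nonempty_iff_eq_empty.1 hX
      have hsevr : sevr rest P = (a ∩ P) :: (a \ P) :: r := by
        rw [ih hrest, ha, natr, if_pos haP]
      have hinter : (X ∪ a) ∩ P = a ∩ P := by
        rw [union_inter_distrib_right, hXP, empty_union]
      have hdiff : (X ∪ a) \ P = X ∪ a \ P := by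
        rw [union_sdiff_distrib, (disjoint_iff_inter_eq_empty.2 hXP).sdiff_eq_left]
      simp only [sevr, sevw, if_neg hX, ha, hsevr, natr, hinter, hdiff, if_pos haP]

/-- Severe revision decomposes into severe antiwithdrawal followed by natural
revision. -/
theorem sevr_eq_sevw_natr (C : List (Set M)) (hC : IsPartition C) (P : Set M)
    (hP : P.Nonempty) :
    equivC (sevr C P) (natr (sevw C P) P) := by
  rw [sevr_eq_natr_sevw (hC.exists_inter_nonempty hP)]
  exact fun _ => rfl

end BeliefRevision
end

section
/- Moderate severe revision decomposes into severe antiwithdrawal followed by lexicographic revision: for every total preorder C and formula P, C msev(P) is equivalent to C sev(P) lex(P). -/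
open Set
open scoped Classical

variable {M : Type*}

namespace BeliefRevision

theorem minSet_cons_empty (L : List (Set M)) (Q : Set M) : minSet (∅ :: L) Q = minSet L Q := by
  simp [minSet]

theorem minSet_replicate_empty_append (k : ℕ) (L : List (Set M)) (Q : Set M) :
    minSet (List.replicate k ∅ ++ L) Q = minSet L Q := by
  induction k with
  | zero => rfl
  | succ k ih => rw [List.replicate_succ, List.cons_append, minSet_cons_empty, ih]

/-- Severe antiwithdrawal only merges classes disjoint from `P` into the first class meeting `P`,
so after restriction to `P` it just drops some leading empty classes. -/
theorem exists_map_inter_eq_replicate_append_sevw (C : List (Set M)) (P : Set M) :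
    ∃ k, C.map (· ∩ P) = List.replicate k ∅ ++ (sevw C P).map (· ∩ P) := by
  induction C with
  | nil => exact ⟨0, rfl⟩
  | cons X rest ih =>
    by_cases hX : (X ∩ P).Nonempty
    · exact ⟨0, by simp [sevw, hX]⟩
    obtain ⟨k, hk⟩ := ih
    have hXP : X ∩ P = ∅ := not_nonempty_iff_eq_empty.mp hX
    rcases hs : sevw rest P with _ | ⟨a, r⟩
    · refine ⟨k, ?_⟩
      rw [hs] at hk
      simp [sevw, hs, hXP, hk, List.replicate_succ, ← List.replicate_succ']
    · refine ⟨k + 1, ?_⟩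
      rw [hs] at hk
      simp [sevw, hs, hXP, hk, union_inter_distrib_right, List.replicate_succ]

theorem msev_eq_sevw_lex_general (C : List (Set M)) (P : Set M) :
    equivC (msev C P) (lex (sevw C P) P) := by
  intro Q
  obtain ⟨k, hk⟩ := exists_map_inter_eq_replicate_append_sevw C P
  rw [msev, lex, hk, List.append_assoc, minSet_replicate_empty_append]

/-- Moderate severe revision decomposes into severe antiwithdrawal followed by
lexicographic revision. -/
theorem msev_eq_sevw_lex (C : List (Set M)) (hC : IsPartition C) (P : Set M)
    (hP : P.Nonempty) :
    equivC (msev C P) (lex (sevw C P) P) :=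
  msev_eq_sevw_lex_general C P

end BeliefRevision
end

section
/- Full meet revision decomposes into lexicographic revision by ¬K, severe antiwithdrawal by K, and lexicographic revision by K: for every total preorder C and formula P, C full(P) is equivalent to C lex(¬K) sev(K) lex(K), where K is a formula whose models are exactly min(C,P). -/
open Set
open scoped Classical

variable {M : Type*}

namespace BeliefRevision

lemma foldr_map_inter (l : List (Set M)) (S : Set M) :
    (l.map (· ∩ S)).foldr (· ∪ ·) ∅ = l.foldr (· ∪ ·) ∅ ∩ S := by
  induction l with
  | nil => simp
  | cons X r ih => simp [ih, Set.union_inter_distrib_right]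

lemma minSet_subset_foldr (l : List (Set M)) (P : Set M) :
    minSet l P ⊆ l.foldr (· ∪ ·) ∅ := by
  induction l with
  | nil => simp [minSet]
  | cons X r ih =>
    by_cases h : (X ∩ P).Nonempty
    · simp only [minSet, if_pos h, List.foldr_cons]
      exact Set.inter_subset_left.trans Set.subset_union_left
    · simp only [minSet, if_neg h, List.foldr_cons]
      exact ih.trans Set.subset_union_right

lemma minSet_nonempty' (l : List (Set M)) (P : Set M)
    (h : (l.foldr (· ∪ ·) ∅ ∩ P).Nonempty) : (minSet l P).Nonempty := by
  induction l with
  | nil => simpa using h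
  | cons X r ih =>
    by_cases hx : (X ∩ P).Nonempty
    · simpa [minSet, hx] using hx
    · simp only [minSet, if_neg hx]
      apply ih
      obtain ⟨x, hx1, hx2⟩ := h
      rcases hx1 with hx1 | hx1
      · exact absurd ⟨x, hx1, hx2⟩ hx
      · exact ⟨x, hx1, hx2⟩

lemma disjoint_foldr {X : Set M} {l : List (Set M)}
    (h : ∀ Z ∈ l, Disjoint X Z) : Disjoint X (l.foldr (· ∪ ·) ∅) := by
  induction l with
  | nil => simp
  | cons Z r ih =>
    simp only [List.foldr_cons, Set.disjoint_union_right]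
    exact ⟨h Z (by simp), ih fun W hW => h W (by simp [hW])⟩

lemma minSet_struct : ∀ (C : List (Set M)), C.Pairwise Disjoint → ∀ P : Set M,
    (minSet C P).Nonempty →
    ∃ a b : List (Set M), C.map (· ∩ minSet C P) = a ++ minSet C P :: b ∧
      (∀ Y ∈ a, Y = (∅ : Set M)) ∧ (∀ Y ∈ b, Y = (∅ : Set M))
  | [], _, P, hne => by simp [minSet] at hne
  | X :: rest, hd, P, hne => by
    have hd1 : ∀ Z ∈ rest, Disjoint X Z := (List.pairwise_cons.mp hd).1
    have hd2 : rest.Pairwise Disjoint := (List.pairwise_cons.mp hd).2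
    by_cases h : (X ∩ P).Nonempty
    · have hKdef : minSet (X :: rest) P = X ∩ P := by
        simp only [minSet, if_pos h]
      refine ⟨[], rest.map (· ∩ minSet (X :: rest) P), ?_, by simp, ?_⟩
      · rw [List.map_cons, List.nil_append]
        congr 1
        rw [hKdef]
        exact Set.inter_eq_right.mpr Set.inter_subset_left
      · intro Y hY
        simp only [List.mem_map] at hY
        obtain ⟨Z, hZ, rfl⟩ := hY
        rw [hKdef]
        have := (hd1 Z hZ).symm
        rw [Set.disjoint_left] at this
        ext x; simp only [Set.mem_inter_iff, Set.mem_empty_iff_false, iff_false]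
        rintro ⟨hx1, hx2, -⟩
        exact this hx1 hx2
    · have hKdef : minSet (X :: rest) P = minSet rest P := by
        simp only [minSet, if_neg h]
      rw [hKdef] at hne ⊢
      obtain ⟨a, b, hab, ha, hb⟩ := minSet_struct rest hd2 P hne
      refine ⟨(X ∩ minSet rest P) :: a, b, ?_, ?_, hb⟩
      · rw [List.map_cons, hab, List.cons_append]
      · intro Y hY
        rcases List.mem_cons.mp hY with rfl | hY
        · have hsub := minSet_subset_foldr rest P
          have hdis := disjoint_foldr hd1
          rw [Set.disjoint_left] at hdis
          ext x; simp only [Set.mem_inter_iff, Set.mem_empty_iff_false, iff_false]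
          rintro ⟨hx1, hx2⟩
          exact hdis hx1 (hsub hx2)
        · exact ha Y hY

lemma sevw_empties (b : List (Set M)) (K : Set M) (hK : K.Nonempty) :
    ∀ a : List (Set M), (∀ Y ∈ a, Y = (∅ : Set M)) → sevw (a ++ K :: b) K = K :: b
  | [], _ => by
    have h : (K ∩ K).Nonempty := by simpa using hK
    rw [List.nil_append]
    simp only [sevw, if_pos h]
  | Y :: a', ha => by
    have hY : Y = (∅ : Set M) := ha Y (by simp)
    have hne : ¬ (Y ∩ K).Nonempty := by simp [hY]
    rw [List.cons_append]
    simp only [sevw, if_neg hne,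
      sevw_empties b K hK a' (fun Z hZ => ha Z (by simp [hZ]))]
    simp [hY]

lemma sevw_front (l : List (Set M)) (K a0 : Set M) (r : List (Set M))
    (hl : sevw l K = a0 :: r) :
    ∀ f : List (Set M), (∀ Y ∈ f, Y ∩ K = ∅) →
      sevw (f ++ l) K = (f.foldr (· ∪ ·) ∅ ∪ a0) :: r
  | [], _ => by simpa using hl
  | X :: f', hf => by
    have hX : ¬ (X ∩ K).Nonempty := by simp [hf X (by simp)]
    rw [List.cons_append]
    simp only [sevw, if_neg hX,
      sevw_front l K a0 r hl f' (fun Z hZ => hf Z (by simp [hZ]))]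
    simp [Set.union_assoc]

lemma minSet_empties_append (Q : Set M) (l : List (Set M)) :
    ∀ e : List (Set M), (∀ Y ∈ e, Y = (∅ : Set M)) → minSet (e ++ l) Q = minSet l Q
  | [], _ => rfl
  | Y :: e', he => by
    have hne : ¬ (Y ∩ Q).Nonempty := by simp [he Y (by simp)]
    rw [List.cons_append]
    simp only [minSet, if_neg hne]
    exact minSet_empties_append Q l e' fun Z hZ => he Z (by simp [hZ])

lemma minSet_empties (Q : Set M) (e : List (Set M))
    (he : ∀ Y ∈ e, Y = (∅ : Set M)) : minSet e Q = ∅ := by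
  have := minSet_empties_append Q [] e he
  rwa [List.append_nil] at this

/-- Full meet revision decomposes as `C lex(¬K) sev(K) lex(K)` where
`Mod(K) = min(C,P)`. -/
theorem full_eq_lex_sevw_lex (C : List (Set M)) (hC : IsPartition C) (P K : Set M)
    (hP : P.Nonempty) (hK : K = minSet C P) :
    equivC (full C P) (lex (sevw (lex C Kᶜ) K) K) := by
  have hKne : K.Nonempty := by
    rw [hK]
    apply minSet_nonempty'
    rw [hC.2]
    simpa using hP
  obtain ⟨a, b, hab, ha, hb⟩ := minSet_struct C hC.1 P (hK ▸ hKne)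
  rw [← hK] at hab
  have hlex : lex C Kᶜ = C.map (· ∩ Kᶜ) ++ (a ++ K :: b) := by
    rw [lex, ← hab]
    congr 1
    simp only [Set.diff_compl]
  have hfront : ∀ Y ∈ C.map (· ∩ Kᶜ), Y ∩ K = ∅ := by
    intro Y hY
    simp only [List.mem_map] at hY
    obtain ⟨Z, _, rfl⟩ := hY
    rw [Set.inter_assoc, Set.compl_inter_self, Set.inter_empty]
  have hsev : sevw (lex C Kᶜ) K = Set.univ :: b := by
    rw [hlex, sevw_front (a ++ K :: b) K K b (sevw_empties b K hKne a ha) _ hfront]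
    congr 1
    rw [foldr_map_inter, hC.2, Set.univ_inter, Set.compl_union_self]
  intro Q
  rw [hsev, full, ← hK, lex, List.map_cons, List.map_cons, Set.univ_inter,
    List.cons_append]
  have hbm : ∀ Y ∈ b.map (· ∩ K), Y = (∅ : Set M) := by
    intro Y hY
    simp only [List.mem_map] at hY
    obtain ⟨Z, hZ, rfl⟩ := hY
    rw [hb Z hZ, Set.empty_inter]
  have hbm' : ∀ Y ∈ b.map (· \ K), Y = (∅ : Set M) := by
    intro Y hY
    simp only [List.mem_map] at hY
    obtain ⟨Z, hZ, rfl⟩ := hY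
    rw [hb Z hZ, Set.empty_diff]
  simp only [minSet]
  split_ifs with h1 h2
  · rfl
  · rw [minSet_empties_append Q _ (b.map (· ∩ K)) hbm]
    simp only [minSet, if_pos h2]
  · rw [minSet_empties_append Q _ (b.map (· ∩ K)) hbm]
    simp only [minSet, if_neg h2]
    exact (minSet_empties Q (b.map (· \ K)) hbm').symm

end BeliefRevision
end

section
/- Minimal models of a formula under a sequence of lexicographic revisions from the empty preorder are computed by the maxset construction: for every formula P and formulas L_1,...,L_n, min(∅ lex(L_1) ... lex(L_n), P) = Mod(maxset(P, L_n, ..., L_1)). -/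
open Set
open scoped Classical

variable {M : Type*}

namespace BeliefRevision

lemma maxset_empty (r : List (Set M)) : maxset (∅ : Set M) r = ∅ := by
  induction r with
  | nil => rfl
  | cons L rest ih => simp [maxset, ih]

lemma maxset_nonempty {F : Set M} (hF : F.Nonempty) (r : List (Set M)) :
    (maxset F r).Nonempty := by
  induction r generalizing F with
  | nil => exact hF
  | cons L rest ih =>
    rw [maxset]
    split
    · exact ih ‹_›
    · exact ih hF

lemma minSet_foldl_lex_aux (Ls : List (Set M)) :
    ∀ (C : List (Set M)) (r : List (Set M)),
      (∀ P : Set M, minSet C P = maxset P r) →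
      ∀ P : Set M, minSet (Ls.foldl lex C) P = maxset P (Ls.reverse ++ r) := by
  induction Ls with
  | nil => intro C r h P; simpa using h P
  | cons L Ls ih =>
    intro C r h P
    have h' : ∀ P : Set M, minSet (lex C L) P = maxset P (L :: r) := by
      intro Q
      rw [minSet_lex, h (L ∩ Q), h (Q \ L), maxset]
      by_cases hq : (Q ∩ L).Nonempty
      · have hq' : (L ∩ Q).Nonempty := by rwa [Set.inter_comm]
        rw [if_pos (maxset_nonempty hq' r), if_pos hq, Set.inter_comm]
      · have hq' : L ∩ Q = ∅ := by rwa [Set.inter_comm, Set.not_nonempty_iff_eq_empty] at hq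
        rw [hq', maxset_empty, if_neg Set.not_nonempty_empty, if_neg hq]
        have : Q \ L = Q := by
          rw [Set.not_nonempty_iff_eq_empty] at hq
          ext x
          constructor
          · exact fun hx => hx.1
          · intro hx
            refine ⟨hx, fun hl => ?_⟩
            exact absurd (Set.eq_empty_iff_forall_notMem.mp hq x ⟨hx, hl⟩) (by simp)
        rw [this]
    have := ih (lex C L) (L :: r) h' P
    simpa [List.append_assoc] using this

/-- Minimal models under a sequence of lexicographic revisions from the empty
preorder are computed by the maxset construction:
`min(∅ lex(L₁)...lex(Lₙ), P) = Mod(maxset(P, Lₙ,...,L₁))`. -/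
theorem minSet_foldl_lex_eq_maxset (P : Set M) (Ls : List (Set M)) :
    minSet (Ls.foldl lex [Set.univ]) P = maxset P Ls.reverse := by
  have h := minSet_foldl_lex_aux Ls [Set.univ] []
    (by
      intro Q
      by_cases hq : Q.Nonempty
      · simp [minSet, maxset, hq]
      · rw [Set.not_nonempty_iff_eq_empty] at hq
        simp [minSet, maxset, hq])
    P
  simpa using h

end BeliefRevision
end

section
/- The underformula characterizes the union of classes up to the first class containing models of S: if C = ∅ lex(L_1) ... lex(L_n) and i is the least index such that C(i)∩Mod(S) ≠ ∅, then C(0)∪...∪C(i) = Mod(under(S; L_n,...,L_1)). -/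
open Set
open scoped Classical

variable {M : Type*}

namespace BeliefRevision

/-! Lexicographic revision by `L` places the `L`-part of every class before all the `¬L`-parts.
Hence, if `S` has an `L`-model, the classes up to the first one meeting `S` are the `L`-parts of the
old classes up to the first one meeting `S ∧ L`; otherwise they are the whole `L`-half, which covers
`Mod(L)`, followed by the `¬L`-parts of the old classes up to the first one meeting `S`. This is the
recursion defining `under`, unfolded from the last revision `Lₙ` inward. -/

lemma foldr_union_append (A B : List (Set M)) :
    (A ++ B).foldr (· ∪ ·) ∅ = A.foldr (· ∪ ·) ∅ ∪ B.foldr (· ∪ ·) ∅ := by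
  induction A with
  | nil => simp
  | cons X A ih => simp [ih, union_assoc]

lemma foldr_union_map_inter (C : List (Set M)) (L : Set M) :
    (C.map (· ∩ L)).foldr (· ∪ ·) ∅ = C.foldr (· ∪ ·) ∅ ∩ L := by
  induction C with
  | nil => simp
  | cons X C ih => simp [ih, union_inter_distrib_right]

lemma foldr_union_map_diff (C : List (Set M)) (L : Set M) :
    (C.map (· \ L)).foldr (· ∪ ·) ∅ = C.foldr (· ∪ ·) ∅ \ L := by
  simp only [sdiff_eq, foldr_union_map_inter]

lemma foldr_union_lex (C : List (Set M)) (L : Set M) :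
    (lex C L).foldr (· ∪ ·) ∅ = C.foldr (· ∪ ·) ∅ := by
  rw [lex, foldr_union_append, foldr_union_map_inter, foldr_union_map_diff,
    inter_union_sdiff]

lemma foldr_union_foldl_lex (Ls C : List (Set M)) :
    (Ls.foldl lex C).foldr (· ∪ ·) ∅ = C.foldr (· ∪ ·) ∅ := by
  induction Ls generalizing C with
  | nil => rfl
  | cons L Ls ih => rw [List.foldl_cons, ih, foldr_union_lex]

lemma upTo_map_inter (C : List (Set M)) (L S : Set M) :
    upTo (C.map (· ∩ L)) S = upTo C (S ∩ L) ∩ L := by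
  induction C with
  | nil => simp [upTo]
  | cons X C ih =>
    have hmeet : X ∩ L ∩ S = X ∩ (S ∩ L) := by rw [inter_assoc, inter_comm L]
    simp only [List.map_cons, upTo, hmeet, ih]
    split <;> simp [union_inter_distrib_right]

lemma upTo_map_diff (C : List (Set M)) (L S : Set M) :
    upTo (C.map (· \ L)) S = upTo C (S \ L) \ L := by
  simp only [sdiff_eq, upTo_map_inter]

lemma upTo_append (A B : List (Set M)) (S : Set M) :
    upTo (A ++ B) S =
      if (A.foldr (· ∪ ·) ∅ ∩ S).Nonempty then upTo A S
      else A.foldr (· ∪ ·) ∅ ∪ upTo B S := by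
  induction A with
  | nil => simp
  | cons X A ih =>
    simp only [List.cons_append, List.foldr_cons, upTo, ih, union_inter_distrib_right,
      union_nonempty]
    by_cases hX : (X ∩ S).Nonempty
    · simp [hX]
    · by_cases hA : (A.foldr (· ∪ ·) ∅ ∩ S).Nonempty <;> simp [hX, hA, union_assoc]

lemma upTo_lex (C : List (Set M)) (L S : Set M) (hC : C.foldr (· ∪ ·) ∅ = univ) :
    upTo (lex C L) S =
      if (S ∩ L).Nonempty then upTo C (S ∩ L) ∩ L else L ∪ upTo C S := by
  rw [lex, upTo_append, foldr_union_map_inter, hC, univ_inter, inter_comm L S,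
    upTo_map_inter, upTo_map_diff]
  split_ifs with hSL
  · rfl
  · rw [sdiff_eq_left.mpr (disjoint_iff_inter_eq_empty.mpr (not_nonempty_iff_eq_empty.mp hSL)),
      union_sdiff_self]

theorem upTo_eq_under_general (Ls : List (Set M)) (S : Set M) :
    upTo (Ls.foldl lex [Set.univ]) S = under S Ls.reverse := by
  induction Ls using List.reverseRecOn generalizing S with
  | nil => simp [upTo, under]
  | append_singleton Ls L ih =>
    have hcover : (Ls.foldl lex [univ]).foldr (· ∪ ·) ∅ = univ := by
      simp [foldr_union_foldl_lex]
    rw [List.foldl_append, List.foldl_cons, List.foldl_nil, upTo_lex _ _ _ hcover,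
      List.reverse_append, List.reverse_singleton, List.singleton_append, under, ih, ih,
      inter_comm (under _ _)]

/-- The underformula characterizes the union of the classes of
`∅ lex(L₁)...lex(Lₙ)` up to the first class containing models of `S`. -/
theorem upTo_eq_under (Ls : List (Set M)) (S : Set M) (hS : S.Nonempty) :
    upTo (Ls.foldl lex [Set.univ]) S = under S Ls.reverse :=
  upTo_eq_under_general Ls S

end BeliefRevision
end

section
/- Moderate severe revision coincides with lexicographic revision on jointly consistent sequences: if S_1 ∧ ... ∧ S_n is consistent, then ∅ msev(S_1) ... msev(S_n) = ∅ lex(S_1) ... lex(S_n), and moreover class zero of this preorder is Mod(S_1 ∧ ... ∧ S_n). -/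
open Set
open scoped Classical

variable {M : Type*}

namespace BeliefRevision

lemma msev_aux (Ss : List (Set M)) :
    ∀ (X : Set M) (rest : List (Set M)),
      (X ∩ Ss.foldr (· ∩ ·) Set.univ).Nonempty →
      Ss.foldl msev (X :: rest) = Ss.foldl lex (X :: rest) ∧
      (Ss.foldl msev (X :: rest)).getD 0 ∅ = X ∩ Ss.foldr (· ∩ ·) Set.univ := by
  induction Ss with
  | nil => intro X rest h; simp
  | cons P rest' ih =>
    intro X rest h
    have h1 : (X ∩ P).Nonempty := by
      obtain ⟨x, hx⟩ := h
      exact ⟨x, hx.1, (hx.2 : x ∈ P ∩ _).1⟩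
    have hsev : sevw (X :: rest) P = X :: rest := by
      simp [sevw, h1]
    have hmsev : msev (X :: rest) P = lex (X :: rest) P := by
      simp [msev, lex, hsev]
    have h2 : ((X ∩ P) ∩ rest'.foldr (· ∩ ·) Set.univ).Nonempty := by
      obtain ⟨x, hx⟩ := h
      exact ⟨x, ⟨hx.1, (hx.2 : x ∈ P ∩ _).1⟩, (hx.2 : x ∈ P ∩ _).2⟩
    have hlex : lex (X :: rest) P = (X ∩ P) :: (rest.map (· ∩ P) ++ (X :: rest).map (· \ P)) := by
      simp [lex]
    obtain ⟨e1, e2⟩ := ih (X ∩ P) (rest.map (· ∩ P) ++ (X :: rest).map (· \ P)) h2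
    refine ⟨?_, ?_⟩
    · simp only [List.foldl_cons, hmsev, hlex] at e1 ⊢
      rw [e1]
    · simp only [List.foldl_cons, hmsev, hlex] at e2 ⊢
      rw [e2, List.foldr_cons, Set.inter_assoc]

/-- On jointly consistent sequences, moderate severe revision coincides with
lexicographic revision, and class zero is `Mod(S₁ ∧ ... ∧ Sₙ)`. -/
theorem msev_eq_lex_of_consistent (Ss : List (Set M))
    (hcons : (Ss.foldr (· ∩ ·) Set.univ).Nonempty) :
    Ss.foldl msev [Set.univ] = Ss.foldl lex [Set.univ] ∧
    (Ss.foldl msev [Set.univ]).getD 0 ∅ = Ss.foldr (· ∩ ·) Set.univ := by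
  have h : (Set.univ ∩ Ss.foldr (· ∩ ·) Set.univ).Nonempty := by simpa using hcons
  obtain ⟨e1, e2⟩ := msev_aux Ss Set.univ [] h
  exact ⟨e1, by simpa using e2⟩

end BeliefRevision
end

section
/- Plain severe revision can be expressed as a severe antiwithdrawal followed by a lexicographic revision: for every total preorder C and formula P, C psev(P) is equivalent to C sev(¬K') lex(K), where K has models min(C,P) and K' has models min(C sev(P), ⊤) (the first nonempty class of C sev(P)). -/
open Set
open scoped Classical

variable {M : Type*}

namespace BeliefRevision

lemma mem_foldr_union_s16 {L : List (Set M)} {I : Set M} {x : M} :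
    x ∈ L.foldr (· ∪ ·) I ↔ x ∈ I ∨ ∃ s ∈ L, x ∈ s := by
  induction L with
  | nil => simp
  | cons a l ih => simp [ih]; tauto

lemma minSet_cons (X : Set M) (L : List (Set M)) (Q : Set M) :
    minSet (X :: L) Q = if (X ∩ Q).Nonempty then X ∩ Q else minSet L Q := rfl

lemma minSet_skip {A L : List (Set M)} {Q : Set M} (hA : ∀ Y ∈ A, Y ∩ Q = ∅) :
    minSet (A ++ L) Q = minSet L Q := by
  induction A with
  | nil => rfl
  | cons a A ih =>
    have ha : ¬(a ∩ Q).Nonempty := by rw [hA a (by simp)]; simp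
    rw [List.cons_append, minSet_cons, if_neg ha,
      ih (fun Y hY => hA Y (List.mem_cons_of_mem _ hY))]

lemma exists_split {L : List (Set M)} {P : Set M} {x : M}
    (hx : x ∈ L.foldr (· ∪ ·) ∅) (hxP : x ∈ P) :
    ∃ A X R, L = A ++ X :: R ∧ (∀ Y ∈ A, Y ∩ P = ∅) ∧ (X ∩ P).Nonempty := by
  induction L with
  | nil => simp at hx
  | cons a l ih =>
    by_cases h : (a ∩ P).Nonempty
    · exact ⟨[], a, l, rfl, by simp, h⟩
    · have hna : x ∉ a := fun hxa =>
        h ⟨x, hxa, hxP⟩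
      have hx2 : x ∈ a ∪ l.foldr (· ∪ ·) ∅ := hx
      have hx' : x ∈ l.foldr (· ∪ ·) ∅ := by
        rcases hx2 with h1 | h1
        · exact absurd h1 hna
        · exact h1
      obtain ⟨A, X, R, hEq, hA, hX⟩ := ih hx'
      exact ⟨a :: A, X, R, by rw [hEq]; rfl,
        fun Y hY => by
          rcases List.mem_cons.mp hY with rfl | hY'
          · exact Set.not_nonempty_iff_eq_empty.mp h
          · exact hA Y hY', hX⟩

lemma split_nonempty (R : List (Set M)) :
    (∀ Y ∈ R, Y = (∅ : Set M)) ∨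
      ∃ E Y R', R = E ++ Y :: R' ∧ (∀ Z ∈ E, Z = (∅ : Set M)) ∧ Y.Nonempty := by
  induction R with
  | nil => exact Or.inl (by simp)
  | cons a l ih =>
    by_cases h : a.Nonempty
    · exact Or.inr ⟨[], a, l, rfl, by simp, h⟩
    · have ha := Set.not_nonempty_iff_eq_empty.mp h
      rcases ih with h1 | ⟨E, Y, R', hEq, hE, hY⟩
      · exact Or.inl (fun Y hY => by
          rcases List.mem_cons.mp hY with rfl | hY'
          · exact ha
          · exact h1 Y hY')
      · refine Or.inr ⟨a :: E, Y, R', by rw [hEq]; rfl, ?_, hY⟩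
        intro Z hZ
        rcases List.mem_cons.mp hZ with rfl | hZ'
        · exact ha
        · exact hE Z hZ'

lemma psev_prepend {A : List (Set M)} {P : Set M} (hA : ∀ Y ∈ A, Y ∩ P = ∅)
    {rest : List (Set M)} {a b : Set M} {r : List (Set M)}
    (h : psev rest P = a :: b :: r) :
    psev (A ++ rest) P = a :: (A.foldr (· ∪ ·) b) :: r := by
  induction A with
  | nil => simpa using h
  | cons c A ih =>
    have hc : ¬(c ∩ P).Nonempty := by rw [hA c (by simp)]; simp
    have ih' := ih (fun Y hY => hA Y (List.mem_cons_of_mem _ hY))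
    simp only [List.cons_append, List.append_eq, psev, if_neg hc, ih', List.foldr_cons]

lemma sevw_prepend {A : List (Set M)} {Q : Set M} (hA : ∀ Y ∈ A, Y ∩ Q = ∅)
    {X : Set M} {R : List (Set M)} (hX : (X ∩ Q).Nonempty) :
    sevw (A ++ X :: R) Q = (A.foldr (· ∪ ·) X) :: R := by
  induction A with
  | nil => simp [sevw, if_pos hX]
  | cons c A ih =>
    have hc : ¬(c ∩ Q).Nonempty := by rw [hA c (by simp)]; simp
    have ih' := ih (fun Y hY => hA Y (List.mem_cons_of_mem _ hY))
    simp only [List.cons_append, List.append_eq, sevw, if_neg hc, ih', List.foldr_cons]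

lemma sevw_all_empty {Q : Set M} : ∀ {L : List (Set M)}, L ≠ [] →
    (∀ Y ∈ L, Y ∩ Q = ∅) →
    ∃ U, sevw L Q = [U] ∧ ∀ x, x ∈ U ↔ ∃ s ∈ L, x ∈ s := by
  intro L
  induction L with
  | nil => intro h; exact absurd rfl h
  | cons X l ih =>
    intro _ hL
    have hX : ¬(X ∩ Q).Nonempty := by rw [hL X (by simp)]; simp
    rcases List.eq_nil_or_concat l with rfl | hne
    · exact ⟨X, by simp [sevw, if_neg hX], by simp⟩
    · have hlne : l ≠ [] := by rcases hne with ⟨l', b, rfl⟩; simp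
      obtain ⟨U, hU, hUm⟩ := ih hlne (fun Y hY => hL Y (List.mem_cons_of_mem _ hY))
      refine ⟨X ∪ U, ?_, ?_⟩
      · simp only [sevw, if_neg hX, hU]
      · intro x
        constructor
        · rintro (hx | hx)
          · exact ⟨X, by simp, hx⟩
          · obtain ⟨s, hs, hxs⟩ := (hUm x).mp hx
            exact ⟨s, by simp [hs], hxs⟩
        · rintro ⟨s, hs, hxs⟩
          rcases List.mem_cons.mp hs with rfl | hs'
          · exact Or.inl hxs
          · exact Or.inr ((hUm x).mpr ⟨s, hs', hxs⟩)

lemma mergeJ_all_empty {E : List (Set M)} (hE : ∀ Z ∈ E, Z = (∅ : Set M))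
    (B : Set M) : mergeJ B E = [B] := by
  induction E with
  | nil => rfl
  | cons a l ih =>
    have ha : ¬(a : Set M).Nonempty := by rw [hE a (by simp)]; simp
    simp only [mergeJ, if_neg ha]
    exact ih (fun Z hZ => hE Z (List.mem_cons_of_mem _ hZ))

lemma mergeJ_skip {E : List (Set M)} (hE : ∀ Z ∈ E, Z = (∅ : Set M))
    (B Y : Set M) (hY : Y.Nonempty) (R' : List (Set M)) :
    mergeJ B (E ++ Y :: R') = (B ∪ Y) :: R' := by
  induction E with
  | nil => simp [mergeJ, if_pos hY]
  | cons a l ih =>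
    have ha : ¬(a : Set M).Nonempty := by rw [hE a (by simp)]; simp
    simp only [List.cons_append, mergeJ, if_neg ha]
    exact ih (fun Z hZ => hE Z (List.mem_cons_of_mem _ hZ))

/-- Plain severe revision is a severe antiwithdrawal followed by a lexicographic
revision: `C psev(P) ≡ C sev(¬K') lex(K)` where `Mod(K) = min(C,P)` and
`Mod(K') = min(C sev(P), ⊤)`. -/
theorem psev_eq_sevw_lex (C : List (Set M)) (hC : IsPartition C) (P : Set M)
    (hP : P.Nonempty) (K K' : Set M) (hK : K = minSet C P)
    (hK' : K' = minSet (sevw C P) Set.univ) :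
    equivC (psev C P) (lex (sevw C K'ᶜ) K) := by
  obtain ⟨p, hpP⟩ := hP
  have hcov := hC.2
  have hD := hC.1
  have hpU : p ∈ C.foldr (· ∪ ·) ∅ := by rw [hcov]; trivial
  obtain ⟨A, X, R, rfl, hA, hX⟩ := exists_split hpU hpP
  have hpa := List.pairwise_append.mp hD
  have hAdisj : ∀ a ∈ A, ∀ z ∈ X :: R, Disjoint a z := hpa.2.2
  have hXR : ∀ z ∈ R, Disjoint X z := (List.pairwise_cons.mp hpa.2.1).1
  set U := A.foldr (· ∪ ·) X with hU
  have hsev : sevw (A ++ X :: R) P = U :: R := sevw_prepend hA hX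
  obtain ⟨q, hqX, hqP⟩ := id hX
  have hqU : q ∈ U := mem_foldr_union_s16.mpr (Or.inl hqX)
  have hK'U : K' = U := by
    rw [hK', hsev, minSet_cons, if_pos ⟨q, hqU, trivial⟩, Set.inter_univ]
  have hKval : K = X ∩ P := by
    rw [hK, minSet_skip hA, minSet_cons, if_pos ⟨q, hqX, hqP⟩]
  have hKX : K ⊆ X := by rw [hKval]; exact Set.inter_subset_left
  have hXU : X ⊆ U := fun x hx => mem_foldr_union_s16.mpr (Or.inl hx)
  have hAU : ∀ a ∈ A, a ⊆ U := fun a ha x hx => mem_foldr_union_s16.mpr (Or.inr ⟨a, ha, hx⟩)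
  have hAK : ∀ a ∈ A, ∀ x ∈ a, x ∉ K := by
    intro a ha x hx hxK
    have hmem : x ∈ a ∩ P := ⟨hx, (hKval ▸ hxK).2⟩
    rw [hA a ha] at hmem
    exact hmem
  rcases split_nonempty R with hRe | ⟨E, Y, R', rfl, hE, hYne⟩
  · -- degenerate case: everything after X is empty
    have hpX : psev (X :: R) P = (X ∩ P) :: (X \ P) :: [] := by
      simp only [psev, if_pos hX, mergeJ_all_empty hRe]
    have hps : psev (A ++ X :: R) P = (X ∩ P) :: (A.foldr (· ∪ ·) (X \ P)) :: [] :=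
      psev_prepend hA hpX
    have hallK : ∀ Z ∈ A ++ X :: R, Z ∩ K'ᶜ = ∅ := by
      intro Z hZ
      apply Set.eq_empty_iff_forall_notMem.mpr
      rintro x ⟨hx1, hx2⟩
      rcases List.mem_append.mp hZ with hZA | hZX
      · exact hx2 (by rw [hK'U]; exact hAU Z hZA hx1)
      · rcases List.mem_cons.mp hZX with rfl | hZR
        · exact hx2 (by rw [hK'U]; exact hXU hx1)
        · rw [hRe Z hZR] at hx1
          exact hx1
    obtain ⟨Ua, hUa, hUam⟩ := sevw_all_empty (by simp) hallK
    have hUuniv : Ua = Set.univ := by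
      ext x
      simp only [Set.mem_univ, iff_true]
      have hx : x ∈ (A ++ X :: R).foldr (· ∪ ·) ∅ := by rw [hcov]; trivial
      rcases mem_foldr_union_s16.mp hx with h | ⟨s, hs, hxs⟩
      · exact absurd h (Set.notMem_empty x)
      · exact (hUam x).mpr ⟨s, hs, hxs⟩
    have hsnd : A.foldr (· ∪ ·) (X \ P) = Kᶜ := by
      ext x
      simp only [mem_foldr_union_s16, Set.mem_compl_iff, Set.mem_diff]
      constructor
      · rintro (⟨hx1, hx2⟩ | ⟨a, ha, hxa⟩)
        · rw [hKval]
          rintro ⟨_, h2⟩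
          exact hx2 h2
        · exact hAK a ha x hxa
      · intro hxK
        have hx : x ∈ (A ++ X :: R).foldr (· ∪ ·) ∅ := by rw [hcov]; trivial
        rcases mem_foldr_union_s16.mp hx with h | ⟨s, hs, hxs⟩
        · exact absurd h (Set.notMem_empty x)
        · rcases List.mem_append.mp hs with hsA | hsX
          · exact Or.inr ⟨s, hsA, hxs⟩
          · rcases List.mem_cons.mp hsX with rfl | hsR
            · refine Or.inl ⟨hxs, fun hxP => hxK ?_⟩
              rw [hKval]
              exact ⟨hxs, hxP⟩
            · rw [hRe s hsR] at hxs
              exact absurd hxs (Set.notMem_empty x)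
    intro Q
    have hcomp : Set.univ \ K = Kᶜ := (Set.compl_eq_univ_diff K).symm
    rw [hps, hUa, hsnd, ← hKval]
    simp only [lex, List.map_cons, List.map_nil, hUuniv, Set.univ_inter, hcomp,
      List.cons_append, List.nil_append]
  · -- main case: Y is the first nonempty class after X
    have hYR : Y ∈ E ++ Y :: R' := by simp
    have hYK'c : (Y ∩ K'ᶜ).Nonempty := by
      obtain ⟨y, hy⟩ := hYne
      refine ⟨y, hy, fun hyK' => ?_⟩
      rw [hK'U] at hyK'
      rcases mem_foldr_union_s16.mp hyK' with hyX | ⟨a, ha, hya⟩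
      · exact Set.disjoint_left.mp (hXR Y hYR) hyX hy
      · exact Set.disjoint_left.mp (hAdisj a ha Y (List.mem_cons_of_mem _ hYR)) hya hy
    have hA2 : ∀ Z ∈ A ++ X :: E, Z ∩ K'ᶜ = ∅ := by
      intro Z hZ
      apply Set.eq_empty_iff_forall_notMem.mpr
      rintro x ⟨hx1, hx2⟩
      rcases List.mem_append.mp hZ with hZA | hZX
      · exact hx2 (by rw [hK'U]; exact hAU Z hZA hx1)
      · rcases List.mem_cons.mp hZX with rfl | hZE
        · exact hx2 (by rw [hK'U]; exact hXU hx1)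
        · rw [hE Z hZE] at hx1
          exact hx1
    have hassoc : A ++ X :: (E ++ Y :: R') = (A ++ X :: E) ++ Y :: R' := by simp
    have hsv : sevw (A ++ X :: (E ++ Y :: R')) K'ᶜ
        = ((A ++ X :: E).foldr (· ∪ ·) Y) :: R' := by
      rw [hassoc]
      exact sevw_prepend hA2 hYK'c
    set W := (A ++ X :: E).foldr (· ∪ ·) Y with hW
    have hpsX : psev (X :: (E ++ Y :: R')) P
        = (X ∩ P) :: ((X \ P) ∪ Y) :: R' := by
      simp only [psev, if_pos hX, mergeJ_skip hE _ _ hYne]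
    have hps : psev (A ++ X :: (E ++ Y :: R')) P
        = (X ∩ P) :: (A.foldr (· ∪ ·) ((X \ P) ∪ Y)) :: R' := psev_prepend hA hpsX
    have hzK : ∀ z ∈ R', z ∩ K = ∅ := by
      intro z hz
      apply Set.eq_empty_iff_forall_notMem.mpr
      rintro x ⟨hx1, hx2⟩
      exact Set.disjoint_left.mp (hXR z (by simp [hz])) (hKX hx2) hx1
    have hXW : X ⊆ W := fun x hx => mem_foldr_union_s16.mpr (Or.inr ⟨X, by simp, hx⟩)
    have hWK : W ∩ K = K := Set.inter_eq_right.mpr (fun x hx => hXW (hKX hx))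
    have hYK : ∀ x ∈ Y, x ∉ K := fun x hx hxK =>
      Set.disjoint_left.mp (hXR Y hYR) (hKX hxK) hx
    have hWdiff : W \ K = A.foldr (· ∪ ·) ((X \ P) ∪ Y) := by
      ext x
      simp only [hW, Set.mem_diff, mem_foldr_union_s16, Set.mem_union, List.mem_append,
        List.mem_cons]
      constructor
      · rintro ⟨hxY | ⟨s, hs, hxs⟩, hnK⟩
        · exact Or.inl (Or.inr hxY)
        · rcases hs with hsA | rfl | hsE
          · exact Or.inr ⟨s, hsA, hxs⟩
          · refine Or.inl (Or.inl ⟨hxs, fun hxP => hnK ?_⟩)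
            rw [hKval]
            exact ⟨hxs, hxP⟩
          · rw [hE s hsE] at hxs
            exact absurd hxs (Set.notMem_empty x)
      · rintro ((⟨hxX, hxnP⟩ | hxY) | ⟨a, ha, hxa⟩)
        · refine ⟨Or.inr ⟨X, Or.inr (Or.inl rfl), hxX⟩, fun hxK => hxnP ?_⟩
          rw [hKval] at hxK
          exact hxK.2
        · exact ⟨Or.inl hxY, hYK x hxY⟩
        · exact ⟨Or.inr ⟨a, Or.inl ha, hxa⟩, hAK a ha x hxa⟩
    have hmapd : R'.map (· \ K) = R' := by
      have h1 : ∀ z ∈ R', z \ K = z := by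
        intro z hz
        ext x
        constructor
        · exact fun h => h.1
        · intro h
          refine ⟨h, fun hxK => ?_⟩
          exact (Set.eq_empty_iff_forall_notMem.mp (hzK z hz)) x ⟨h, hxK⟩
      conv_rhs => rw [← List.map_id R']
      exact List.map_congr_left (fun z hz => h1 z hz)
    intro Q
    rw [hps, hsv, ← hKval]
    simp only [lex, List.map_cons, List.cons_append]
    rw [hWK, hWdiff, hmapd]
    have hmid : ∀ s ∈ R'.map (· ∩ K), s ∩ Q = ∅ := by
      intro s hs
      obtain ⟨z, hz, rfl⟩ := List.mem_map.mp hs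
      rw [hzK z hz]
      simp
    simp only [minSet_cons]
    by_cases h : (K ∩ Q).Nonempty
    · rw [if_pos h, if_pos h]
    · rw [if_neg h, if_neg h, minSet_skip hmid, minSet_cons]

end BeliefRevision
end

section
/- Starting from the empty preorder, full meet revision and plain severe revision are interchangeable: for every sequence of formulas P_1,...,P_n, ∅ full(P_1) ... full(P_n) is equivalent to ∅ psev(P_1) ... psev(P_n). -/
open Set
open scoped Classical

variable {M : Type*}

namespace BeliefRevision

/-!
After the first revision by a consistent `P` both operators produce the two-class preorder
`[P, Mod(⊤) \ P]`. On a two-class preorder `[A, Mod(⊤) \ A]` plain severe revision by a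
consistent `Q` merges everything except `min(C, Q)` into a single second class, which is
literally the full meet revision. So the two iterations build the same list of classes.
-/

lemma mergeJ_singleton (X Y : Set M) : mergeJ X [Y] = [X ∪ Y] := by
  by_cases hY : Y.Nonempty
  · simp only [mergeJ, if_pos hY]
  · rw [not_nonempty_iff_eq_empty.mp hY, union_empty]
    simp only [mergeJ, if_neg Set.not_nonempty_empty]

lemma full_univ {P : Set M} (hP : P.Nonempty) : full [univ] P = [P, univ \ P] := by
  simp only [full, minSet, univ_inter, if_pos hP]

lemma psev_univ {P : Set M} (hP : P.Nonempty) : psev [univ] P = [P, univ \ P] := by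
  simp only [psev, univ_inter, if_pos hP, mergeJ]

lemma psev_pair_eq_full (A : Set M) {Q : Set M} (hQ : Q.Nonempty) :
    psev [A, univ \ A] Q = full [A, univ \ A] Q := by
  by_cases hAQ : (A ∩ Q).Nonempty
  · simp only [psev, full, minSet, if_pos hAQ, mergeJ_singleton, List.cons.injEq, and_true, true_and]
    ext x
    simp only [mem_union, mem_sdiff, mem_inter_iff, mem_univ, true_and]
    tauto
  · have hAQ' : ((univ \ A) ∩ Q).Nonempty := by
      obtain ⟨q, hq⟩ := hQ
      exact ⟨q, ⟨mem_univ q, fun hqA => hAQ ⟨q, hqA, hq⟩⟩, hq⟩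
    simp only [psev, full, minSet, if_neg hAQ, if_pos hAQ', mergeJ, List.cons.injEq, and_true, true_and]
    ext x
    simp only [mem_union, mem_sdiff, mem_inter_iff, mem_univ, true_and]
    tauto

lemma foldl_full_pair_eq_foldl_psev (A : Set M) {Ps : List (Set M)}
    (h : ∀ P ∈ Ps, P.Nonempty) :
    Ps.foldl full [A, univ \ A] = Ps.foldl psev [A, univ \ A] := by
  induction Ps generalizing A with
  | nil => rfl
  | cons Q Ps ih =>
    rw [List.foldl_cons, List.foldl_cons, psev_pair_eq_full A (h Q List.mem_cons_self), full]
    exact ih _ fun P hP => h P (List.mem_cons_of_mem Q hP)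

/-- Starting from the empty preorder, full meet revision and plain severe
revision are interchangeable. -/
theorem full_eq_psev_from_empty (Ps : List (Set M)) (h : ∀ P ∈ Ps, P.Nonempty) :
    equivC (Ps.foldl full [Set.univ]) (Ps.foldl psev [Set.univ]) := by
  cases Ps with
  | nil => exact fun _ => rfl
  | cons P Ps =>
    have hP := h P List.mem_cons_self
    rw [List.foldl_cons, List.foldl_cons, full_univ hP, psev_univ hP,
      foldl_full_pair_eq_foldl_psev P fun Q hQ => h Q (List.mem_cons_of_mem P hQ)]
    exact fun _ => rfl

end BeliefRevision
end
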